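/- Let a : ℝ → ℝ be continuous and 1-periodic and b : ℝ → ℝ be C¹ and 1-periodic, and suppose there exist constants β, γ ∈ ℝ with a = β + γ·b. If Φ₁ is a positive, 1-periodic, C² function with Φ₁'' − (b·Φ₁)' + a·Φ₁ = k₁·Φ₁ for some k₁ ∈ ℝ, and Φ₂ is a positive, 1-periodic, C² function with Φ₂'' + (b·Φ₂)' + a·Φ₂ = k₂·Φ₂ for some k₂ ∈ ℝ, then k₁ = k₂. In other words, the operators M⁻ : Φ ↦ Φ'' − (bΦ)' + aΦ and M⁺ : Φ ↦ Φ'' + (bΦ)' + aΦ have the same principal eigenvalue when a is an affine function of b. -/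

import Mathlib

open Real MeasureTheory Set Filter Topology

noncomputable section

/-- The operator `L_q^λ[r;D]` acting on C² functions `ψ`:
`(L_q^λ[r;D]ψ)(x) = D ψ'' + ((1+q)D' − 2λD) ψ' + (qD'' + λ²D − (1+q)λD' + r) ψ`. -/
def Lop (q lam : ℝ) (r D ψ : ℝ → ℝ) (x : ℝ) : ℝ :=
  D x * deriv (deriv ψ) x + ((1 + q) * deriv D x - 2 * lam * D x) * deriv ψ x +
    (q * deriv (deriv D) x + lam ^ 2 * D x - (1 + q) * lam * deriv D x + r x) * ψ x

/-- `(k, ψ)` is a principal eigenpair of `L_q^λ[r;D]`: `ψ` is a positive, 1-periodic,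
C² function with `L_q^λ[r;D]ψ = kψ`. -/
def IsEigenpair (q lam : ℝ) (r D : ℝ → ℝ) (k : ℝ) (ψ : ℝ → ℝ) : Prop :=
  ContDiff ℝ 2 ψ ∧ (∀ x, 0 < ψ x) ∧ Function.Periodic ψ 1 ∧
    ∀ x, Lop q lam r D ψ x = k * ψ x

/-- The Freidlin–Gärtner infimum `inf_{λ>0} k(λ)/λ`, as an extended real number. -/
def speed (k : ℝ → ℝ) : EReal := ⨅ l : {l : ℝ // 0 < l}, ((k l.1 / l.1 : ℝ) : EReal)

/-!
With `a = β + γ b`, the eigen-equation `Φ'' + σ (bΦ)' + aΦ = kΦ` (`σ = ±1`) becomes the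
first-order equation `w' = -σγ w + (k - β - γ²) Φ` for the shifted flux
`w = Φ' + σ (b - γ) Φ`. For the two problems (`σ = -1` and `σ = 1`) one computes
`(Φ₁Φ₂)' = Φ₁w₂ + Φ₂w₁` and `(w₁w₂)' = l₁Φ₁w₂ + l₂Φ₂w₁` with `lᵢ = kᵢ - β - γ²`, so by
periodicity `A + B = 0` and `l₁A + l₂B = 0` for `A = ∫Φ₁w₂`, `B = ∫Φ₂w₁`. If `l₁ ≠ l₂` then
`A = B = 0`. But a periodic solution of `w' = c w + lΦ` with `Φ > 0` and `l ≠ 0` has a strict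
sign (variation of constants over one period), so `A = 0` forces `l₂ = 0` and `B = 0` forces
`l₁ = 0`, a contradiction.
-/

theorem Function.Periodic.deriv {F : Type*} [NormedAddCommGroup F] [NormedSpace ℝ F]
    {f : ℝ → F} {c : ℝ} (hf : Function.Periodic f c) : Function.Periodic (deriv f) c := by
  intro x
  rw [← deriv_comp_add_const, funext hf]

theorem integral_eq_zero_of_hasDerivAt_of_periodic {F F' : ℝ → ℝ} {T : ℝ}
    (hF : ∀ x, HasDerivAt F (F' x) x) (hper : Function.Periodic F T) (hF' : Continuous F') :
    ∫ x in (0 : ℝ)..T, F' x = 0 := by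
  have hT : F T = F 0 := by simpa using hper 0
  rw [intervalIntegral.integral_eq_sub_of_hasDerivAt (fun x _ => hF x)
    (hF'.intervalIntegrable _ _), hT, sub_self]

section LinearODE

variable {w Φ : ℝ → ℝ} {c l T : ℝ}

/-- Variation of constants for a `T`-periodic solution of `w' = c w + l Φ`. -/
theorem periodic_linearODE_eq_integral (hΦ : Continuous Φ) (hper : Function.Periodic w T)
    (hw : ∀ x, HasDerivAt w (c * w x + l * Φ x) x) (x : ℝ) :
    (exp (-c * T) - 1) * (w x * exp (-c * x)) = l * ∫ t in x..x + T, Φ t * exp (-c * t) := by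
  have hg : ∀ t, HasDerivAt (fun t => w t * exp (-c * t)) (l * (Φ t * exp (-c * t))) t := by
    intro t
    refine ((hw t).mul (((hasDerivAt_id t).const_mul (-c)).exp)).congr_deriv ?_
    simp only [id]
    ring
  rw [← intervalIntegral.integral_const_mul, intervalIntegral.integral_eq_sub_of_hasDerivAt
    (fun t _ => hg t) ((continuous_const.mul (hΦ.mul (by fun_prop))).intervalIntegrable _ _),
    hper x, show -c * (x + T) = -c * T + -c * x by ring, exp_add]
  ring

theorem mul_pos_of_periodic_linearODE (hΦ : Continuous Φ) (hΦpos : ∀ x, 0 < Φ x) (hT : 0 < T)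
    (hl : l ≠ 0) (hper : Function.Periodic w T) (hw : ∀ x, HasDerivAt w (c * w x + l * Φ x) x)
    (x : ℝ) : 0 < (exp (-c * T) - 1) * l * w x := by
  have hint : 0 < ∫ t in x..x + T, Φ t * exp (-c * t) :=
    intervalIntegral.intervalIntegral_pos_of_pos ((hΦ.mul (by fun_prop)).intervalIntegrable _ _)
      (fun t => mul_pos (hΦpos t) (exp_pos _)) (by linarith)
  have key : (exp (-c * T) - 1) * l * w x * exp (-c * x) =
      l ^ 2 * ∫ t in x..x + T, Φ t * exp (-c * t) := by
    linear_combination l * periodic_linearODE_eq_integral hΦ hper hw x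
  exact pos_of_mul_pos_left (by rw [key]; positivity) (exp_pos _).le

theorem integral_mul_periodic_linearODE_ne_zero {Ψ : ℝ → ℝ} (hΨ : Continuous Ψ)
    (hΨpos : ∀ x, 0 < Ψ x) (hΦ : Continuous Φ) (hΦpos : ∀ x, 0 < Φ x) (hT : 0 < T)
    (hl : l ≠ 0) (hper : Function.Periodic w T) (hw : ∀ x, HasDerivAt w (c * w x + l * Φ x) x) :
    ∫ x in (0 : ℝ)..T, Ψ x * w x ≠ 0 := by
  have hwc : Continuous w := continuous_iff_continuousAt.2 fun x => (hw x).continuousAt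
  set s := (exp (-c * T) - 1) * l
  have hpos : 0 < ∫ x in (0 : ℝ)..T, Ψ x * (s * w x) :=
    intervalIntegral.intervalIntegral_pos_of_pos
      ((hΨ.mul (continuous_const.mul hwc)).intervalIntegrable _ _)
      (fun x => mul_pos (hΨpos x) (mul_pos_of_periodic_linearODE hΦ hΦpos hT hl hper hw x)) hT
  intro h
  simp only [mul_left_comm _ s, intervalIntegral.integral_const_mul, h, mul_zero] at hpos
  exact lt_irrefl 0 hpos

theorem integral_periodic_linearODE_pair {w₁ w₂ Φ₁ Φ₂ : ℝ → ℝ} {l₁ l₂ : ℝ}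
    (hΦ₁ : Continuous Φ₁) (hΦ₂ : Continuous Φ₂)
    (hper₁ : Function.Periodic w₁ T) (hper₂ : Function.Periodic w₂ T)
    (hw₁ : ∀ x, HasDerivAt w₁ (c * w₁ x + l₁ * Φ₁ x) x)
    (hw₂ : ∀ x, HasDerivAt w₂ (-c * w₂ x + l₂ * Φ₂ x) x) :
    l₁ * (∫ x in (0 : ℝ)..T, Φ₁ x * w₂ x) + l₂ * ∫ x in (0 : ℝ)..T, Φ₂ x * w₁ x = 0 := by
  have hwc₁ : Continuous w₁ := continuous_iff_continuousAt.2 fun x => (hw₁ x).continuousAt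
  have hwc₂ : Continuous w₂ := continuous_iff_continuousAt.2 fun x => (hw₂ x).continuousAt
  rw [← intervalIntegral.integral_const_mul, ← intervalIntegral.integral_const_mul,
    ← intervalIntegral.integral_add (Continuous.intervalIntegrable (by fun_prop) _ _)
      (Continuous.intervalIntegrable (by fun_prop) _ _)]
  exact integral_eq_zero_of_hasDerivAt_of_periodic
    (fun x => ((hw₁ x).mul (hw₂ x)).congr_deriv (by ring)) (hper₁.mul hper₂) (by fun_prop)

end LinearODE

/-- `Φ' + σ b Φ` is the flux of `Φ'' + σ (bΦ)'`; the shift by `-σγΦ` absorbs `a = β + γ b`. -/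
def shiftedFlux (σ γ : ℝ) (b Φ : ℝ → ℝ) (x : ℝ) : ℝ :=
  deriv Φ x + σ * (b x - γ) * Φ x

section ShiftedFlux

variable {σ γ : ℝ} {b Φ : ℝ → ℝ}

theorem Function.Periodic.shiftedFlux {T : ℝ} (hb : Function.Periodic b T)
    (hΦ : Function.Periodic Φ T) : Function.Periodic (shiftedFlux σ γ b Φ) T := by
  intro x
  simp only [_root_.shiftedFlux, hΦ.deriv x, hb x, hΦ x]

theorem hasDerivAt_shiftedFlux {a : ℝ → ℝ} {β k : ℝ} (hσ : σ ^ 2 = 1)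
    (hb : Differentiable ℝ b) (hΦ : ContDiff ℝ 2 Φ) (hab : ∀ x, a x = β + γ * b x)
    (heq : ∀ x, deriv (deriv Φ) x + σ * deriv (fun y => b y * Φ y) x + a x * Φ x = k * Φ x)
    (x : ℝ) :
    HasDerivAt (shiftedFlux σ γ b Φ)
      (-σ * γ * shiftedFlux σ γ b Φ x + (k - β - γ ^ 2) * Φ x) x := by
  have hΦ1 : Differentiable ℝ Φ := hΦ.differentiable (by norm_num)
  have hΦ2 : Differentiable ℝ (deriv Φ) :=
    (hΦ.iterate_deriv' 1 1).differentiable (by norm_num)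
  have hbΦ : HasDerivAt (fun y => b y * Φ y) (deriv (fun y => b y * Φ y) x) x :=
    ((hb x).mul (hΦ1 x)).hasDerivAt
  have hw : shiftedFlux σ γ b Φ = fun y => deriv Φ y + σ * (b y * Φ y - γ * Φ y) := by
    ext y
    simp only [shiftedFlux]
    ring
  rw [hw]
  refine ((hΦ2 x).hasDerivAt.add
    ((hbΦ.sub ((hΦ1 x).hasDerivAt.const_mul γ)).const_mul σ)).congr_deriv ?_
  linear_combination heq x - Φ x * hab x + γ * (b x - γ) * Φ x * hσ

theorem hasDerivAt_mul_of_shiftedFlux {Ψ : ℝ → ℝ} (hΦ : Differentiable ℝ Φ)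
    (hΨ : Differentiable ℝ Ψ) (x : ℝ) :
    HasDerivAt (fun y => Φ y * Ψ y)
      (Φ x * shiftedFlux σ γ b Ψ x + Ψ x * shiftedFlux (-σ) γ b Φ x) x := by
  refine ((hΦ x).hasDerivAt.mul (hΨ x).hasDerivAt).congr_deriv ?_
  simp only [shiftedFlux]
  ring

theorem integral_mul_shiftedFlux_add {Ψ : ℝ → ℝ} {T : ℝ} (hΦ : Differentiable ℝ Φ)
    (hΨ : Differentiable ℝ Ψ) (hΦper : Function.Periodic Φ T) (hΨper : Function.Periodic Ψ T)
    (hwΨ : Continuous (shiftedFlux σ γ b Ψ)) (hwΦ : Continuous (shiftedFlux (-σ) γ b Φ)) :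
    (∫ x in (0 : ℝ)..T, Φ x * shiftedFlux σ γ b Ψ x) +
      ∫ x in (0 : ℝ)..T, Ψ x * shiftedFlux (-σ) γ b Φ x = 0 := by
  have hΦc := hΦ.continuous
  have hΨc := hΨ.continuous
  rw [← intervalIntegral.integral_add (Continuous.intervalIntegrable (by fun_prop) _ _)
    (Continuous.intervalIntegrable (by fun_prop) _ _)]
  exact integral_eq_zero_of_hasDerivAt_of_periodic (hasDerivAt_mul_of_shiftedFlux hΦ hΨ)
    (hΦper.mul hΨper) (by fun_prop)

end ShiftedFlux

theorem stmt_11_general (a b : ℝ → ℝ)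
    (hb : ContDiff ℝ 1 b) (hbper : Function.Periodic b 1)
    (β γ : ℝ) (hab : ∀ x, a x = β + γ * b x)
    (k₁ k₂ : ℝ) (Φ₁ Φ₂ : ℝ → ℝ)
    (h1 : ContDiff ℝ 2 Φ₁) (h1pos : ∀ x, 0 < Φ₁ x) (h1per : Function.Periodic Φ₁ 1)
    (heq1 : ∀ x, deriv (deriv Φ₁) x - deriv (fun y => b y * Φ₁ y) x + a x * Φ₁ x
      = k₁ * Φ₁ x)
    (h2 : ContDiff ℝ 2 Φ₂) (h2pos : ∀ x, 0 < Φ₂ x) (h2per : Function.Periodic Φ₂ 1)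
    (heq2 : ∀ x, deriv (deriv Φ₂) x + deriv (fun y => b y * Φ₂ y) x + a x * Φ₂ x
      = k₂ * Φ₂ x) :
    k₁ = k₂ := by
  have hbd : Differentiable ℝ b := hb.differentiable one_ne_zero
  have hw₁ := hasDerivAt_shiftedFlux (σ := -1) (by norm_num) hbd h1 hab
    (fun x => by rw [← heq1 x]; ring)
  have hw₂ := hasDerivAt_shiftedFlux (σ := 1) (by norm_num) hbd h2 hab
    (fun x => by rw [← heq2 x]; ring)
  simp only [neg_neg, one_mul, neg_one_mul] at hw₁ hw₂
  have hw₁per := hbper.shiftedFlux (σ := -1) (γ := γ) h1per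
  have hw₂per := hbper.shiftedFlux (σ := 1) (γ := γ) h2per
  have hsum := integral_mul_shiftedFlux_add (h1.differentiable (by norm_num))
    (h2.differentiable (by norm_num)) h1per h2per
    (continuous_iff_continuousAt.2 fun x => (hw₂ x).continuousAt)
    (continuous_iff_continuousAt.2 fun x => (hw₁ x).continuousAt)
  have hweighted := integral_periodic_linearODE_pair h1.continuous h2.continuous
    hw₁per hw₂per hw₁ hw₂
  have hA := fun hl => integral_mul_periodic_linearODE_ne_zero h1.continuous h1pos
    h2.continuous h2pos one_pos hl hw₂per hw₂
  have hB := fun hl => integral_mul_periodic_linearODE_ne_zero h2.continuous h2pos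
    h1.continuous h1pos one_pos hl hw₁per hw₁
  by_contra hne
  have hA0 : ∫ x in (0 : ℝ)..1, Φ₁ x * shiftedFlux 1 γ b Φ₂ x = 0 :=
    (mul_eq_zero.1 (by linear_combination hweighted - (k₂ - β - γ ^ 2) * hsum :
      (k₁ - k₂) * _ = 0)).resolve_left (sub_ne_zero.2 hne)
  have hl₂ := Function.mtr hA hA0
  have hl₁ := Function.mtr hB (by linear_combination hsum - hA0)
  exact hne (by linarith)

/-- Proposition `VP`, from [BouHamRoq25]. If `a = β + γ·b` for
constants `β, γ`, then the operators `Φ ↦ Φ'' − (bΦ)' + aΦ` and `Φ ↦ Φ'' + (bΦ)' + aΦ`,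
acting on 1-periodic functions, have the same principal eigenvalue. -/
theorem stmt_11 (a b : ℝ → ℝ) (ha : Continuous a) (haper : Function.Periodic a 1)
    (hb : ContDiff ℝ 1 b) (hbper : Function.Periodic b 1)
    (β γ : ℝ) (hab : ∀ x, a x = β + γ * b x)
    (k₁ k₂ : ℝ) (Φ₁ Φ₂ : ℝ → ℝ)
    (h1 : ContDiff ℝ 2 Φ₁) (h1pos : ∀ x, 0 < Φ₁ x) (h1per : Function.Periodic Φ₁ 1)
    (heq1 : ∀ x, deriv (deriv Φ₁) x - deriv (fun y => b y * Φ₁ y) x + a x * Φ₁ x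
      = k₁ * Φ₁ x)
    (h2 : ContDiff ℝ 2 Φ₂) (h2pos : ∀ x, 0 < Φ₂ x) (h2per : Function.Periodic Φ₂ 1)
    (heq2 : ∀ x, deriv (deriv Φ₂) x + deriv (fun y => b y * Φ₂ y) x + a x * Φ₂ x
      = k₂ * Φ₂ x) :
    k₁ = k₂ :=
  stmt_11_general a b hb hbper β γ hab k₁ k₂ Φ₁ Φ₂ h1 h1pos h1per heq1 h2 h2pos h2per heq2
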